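/- Let Γ = G *_A t be the HNN-extension of G where the stable letter t acts as the identity on the subgroup A ≤ G. Then for any subgroup G' of G, the subgroup ⟨G', t⟩ of Γ is the HNN-extension G' *_{G' ∩ A} t; in particular ⟨G', t⟩ ∩ G = G'. -/

import Mathlib

/-!
The inclusion `G' → G` together with `t ↦ t` induces a homomorphism `e` from
`G' *_{G' ∩ A} t` to `G *_A t`, whose image is `⟨G', t⟩`. A reduced word over `G'` stays
reduced over `G`, since a letter of `G'` lies in `G' ∩ A` as soon as it lies in `A`. So by
Britton's lemma an element whose image under `e` lies in `G` contains no stable letter, i.e.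
lies in `G'`. This gives both the injectivity of `e` and `⟨G', t⟩ ∩ G = G'`.
-/

namespace HNNExtension

open NormalWord

variable {G H : Type*} [Group G] [Group H] {A B : Subgroup G} {φ : A ≃* B}
  {A' B' : Subgroup H} {ψ : A' ≃* B'}

theorem sup_closure_t_eq_top :
    (of : G →* HNNExtension G A B φ).range ⊔ Subgroup.closure {t} = ⊤ := by
  refine (Subgroup.eq_top_iff' _).2 fun x => ?_
  induction x using induction_on with
  | of g => exact Subgroup.mem_sup_left ⟨g, rfl⟩
  | t => exact Subgroup.mem_sup_right (Subgroup.subset_closure rfl)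
  | mul x y hx hy => exact mul_mem hx hy
  | inv x hx => exact inv_mem hx

theorem range_lift {K : Type*} [Group K] (f : G →* K) (x : K)
    (hx : ∀ a : A, x * f a = f (φ a : G) * x) :
    (lift f x hx).range = f.range ⊔ Subgroup.closure {x} := by
  rw [MonoidHom.range_eq_map, ← sup_closure_t_eq_top, Subgroup.map_sup, ← MonoidHom.range_comp,
    MonoidHom.map_closure, Set.image_singleton, lift_t,
    show (lift f x hx).comp of = f from MonoidHom.ext (lift_of f x hx)]

theorem NormalWord.ReducedWord.exists_prod_eq (x : HNNExtension G A B φ) :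
    ∃ w : ReducedWord G A B, w.prod φ = x := by
  obtain ⟨d⟩ := TransversalPair.nonempty G A B
  exact ⟨(equiv φ d x).toReducedWord, (equiv φ d).symm_apply_apply x⟩

section map

variable (f : H →* G)

noncomputable def map (hf : ∀ a : A', (t : HNNExtension G A B φ) * of (f a) = of (f (ψ a)) * t) :
    HNNExtension H A' B' ψ →* HNNExtension G A B φ :=
  lift (of.comp f) t hf

variable {f} (hf : ∀ a : A', (t : HNNExtension G A B φ) * of (f a) = of (f (ψ a)) * t)

@[simp]
theorem map_of (h : H) : map f hf (of h) = of (f h) :=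
  lift_of _ _ _ h

@[simp]
theorem map_t : map f hf t = t :=
  lift_t _ _ _

theorem range_map : (map f hf).range = f.range.map of ⊔ Subgroup.closure {t} := by
  rw [map, range_lift, MonoidHom.range_comp]

variable (hA : A.comap f ≤ A') (hB : B.comap f ≤ B')
include hA hB

theorem comap_toSubgroup_le (u : ℤˣ) : (toSubgroup A B u).comap f ≤ toSubgroup A' B' u := by
  rcases Int.units_eq_one_or u with rfl | rfl
  · exact hA
  · exact hB

def NormalWord.ReducedWord.map (w : ReducedWord H A' B') : ReducedWord G A B where
  head := f w.head
  toList := w.toList.map fun p => (p.1, f p.2)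
  chain := (List.isChain_map _).2 <| w.chain.imp fun p _ hp hfp =>
    hp (comap_toSubgroup_le hA hB p.1 hfp)

theorem NormalWord.ReducedWord.prod_map (w : ReducedWord H A' B') :
    (w.map hA hB).prod φ = HNNExtension.map f hf (w.prod ψ) := by
  simp only [ReducedWord.prod, ReducedWord.map, map_mul, map_of, MonoidHom.map_list_prod,
    List.map_map, Function.comp_def, map_zpow, map_t]

theorem mem_range_of_of_map_mem_range_of {x : HNNExtension H A' B' ψ}
    (hx : map f hf x ∈ (of : G →* HNNExtension G A B φ).range) : x ∈ of.range := by
  obtain ⟨w, rfl⟩ := ReducedWord.exists_prod_eq x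
  rw [← w.prod_map hf hA hB] at hx
  have hnil : w.toList = [] := by
    simpa [ReducedWord.map] using ReducedWord.toList_eq_nil_of_mem_of_range φ _ hx
  exact ⟨w.head, by simp [ReducedWord.prod, hnil]⟩

theorem comap_of_range_map :
    (map f hf).range.comap (of : G →* HNNExtension G A B φ) = f.range := by
  ext g
  constructor
  · rintro ⟨x, hx⟩
    obtain ⟨h, rfl⟩ := mem_range_of_of_map_mem_range_of hf hA hB ⟨g, hx.symm⟩
    exact ⟨h, of_injective φ (by simpa using hx)⟩
  · rintro ⟨h, rfl⟩
    exact ⟨of h, map_of hf h⟩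

theorem map_injective (hf_inj : Function.Injective f) : Function.Injective (map f hf) := by
  refine (injective_iff_map_eq_one _).2 fun x hx => ?_
  obtain ⟨h, rfl⟩ := mem_range_of_of_map_mem_range_of hf hA hB (hx ▸ one_mem _)
  rw [map_of, ← map_one of, (of_injective φ).eq_iff, ← map_one f, hf_inj.eq_iff] at hx
  rw [hx, map_one]

end map

end HNNExtension

namespace Stmt11

open HNNExtension

/-- Let `Γ = G *_A t` be the HNN-extension where the stable letter `t` acts as the
identity on the subgroup `A ≤ G`. For any subgroup `G'` of `G`, the subgroup
`⟨G', t⟩` of `Γ` is the HNN-extension `G' *_{G' ∩ A} t` (there is an injective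
homomorphism from that HNN-extension onto `⟨G', t⟩` compatible with the inclusions
and sending stable letter to stable letter); in particular `⟨G', t⟩ ∩ G = G'`. -/
theorem subgroups_in_trivial_HNN_extension
    {G : Type*} [Group G] (A : Subgroup G) (G' : Subgroup G) :
    ∀ Γ' : Subgroup (HNNExtension G A A (MulEquiv.refl ↥A)),
      Γ' = (G'.map (of : G →* HNNExtension G A A (MulEquiv.refl ↥A))) ⊔
           Subgroup.closure {(t : HNNExtension G A A (MulEquiv.refl ↥A))} →
      (∃ e : HNNExtension ↥G' (A.comap G'.subtype) (A.comap G'.subtype)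
            (MulEquiv.refl ↥(A.comap G'.subtype)) →*
          HNNExtension G A A (MulEquiv.refl ↥A),
        Function.Injective e ∧ e.range = Γ' ∧
        (∀ g : ↥G', e (of g) = of (g : G)) ∧ e t = t) ∧
      Γ'.comap (of : G →* HNNExtension G A A (MulEquiv.refl ↥A)) = G' := by
  rintro Γ' rfl
  have hf : ∀ a : A.comap G'.subtype, (t : HNNExtension G A A (.refl A)) * of (G'.subtype a) =
      of (G'.subtype (MulEquiv.refl (A.comap G'.subtype) a)) * t :=
    fun a => t_mul_of (φ := .refl A) ⟨a, a.2⟩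
  have hrange : (map G'.subtype hf).range = G'.map of ⊔ Subgroup.closure {t} := by
    rw [range_map, Subgroup.range_subtype]
  refine ⟨⟨map G'.subtype hf, map_injective hf le_rfl le_rfl G'.subtype_injective, hrange,
    map_of hf, map_t hf⟩, ?_⟩
  rw [← hrange, comap_of_range_map hf le_rfl le_rfl, Subgroup.range_subtype]

end Stmt11
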